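/- The number of lattice walks of length 2n in the quarter plane starting and ending at the origin using the step set S = {(0,1),(0,-1),(1,-1)} equals the Catalan number C(2n,n)/(n+1), and walks of odd length returning to the origin do not exist. -/

import Mathlib

open Finset

/-- Number of quarter-plane walks of length `m` from `(0,0)` to `e` with steps in `S`:
sequences of `m` steps, each in `S`, all partial sums having nonnegative coordinates,
with total sum `e`. -/
noncomputable def qpWalks (S : Set (ℤ × ℤ)) (m : ℕ) (e : ℤ × ℤ) : ℕ :=
  Nat.card {f : Fin m → ℤ × ℤ //
    (∀ i, f i ∈ S) ∧
    (∀ k : ℕ,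
      0 ≤ (∑ i ∈ Finset.univ.filter (fun i : Fin m => (i : ℕ) < k), f i).1 ∧
      0 ≤ (∑ i ∈ Finset.univ.filter (fun i : Fin m => (i : ℕ) < k), f i).2) ∧
    (∑ i, f i) = e}

/-!
Every step of `{(0,1), (0,-1), (1,-1)}` has nonnegative first coordinate, so a walk that returns
to the origin never uses the step `(1,-1)`. It is then a walk on the nonnegative half-line with
steps `±1` returning to `0`, i.e. a Dyck word, and there are `catalan n` Dyck words of length
`2 * n` and none of odd length.
-/

open DyckStep List

def partialSum {m : ℕ} (f : Fin m → ℤ × ℤ) (k : ℕ) : ℤ × ℤ :=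
  ∑ i ∈ univ.filter (fun i : Fin m => (i : ℕ) < k), f i

def IsQPWalk (S : Set (ℤ × ℤ)) (m : ℕ) (e : ℤ × ℤ) (f : Fin m → ℤ × ℤ) : Prop :=
  (∀ i, f i ∈ S) ∧ (∀ k, 0 ≤ (partialSum f k).1 ∧ 0 ≤ (partialSum f k).2) ∧ ∑ i, f i = e

lemma qpWalks_eq_card (S : Set (ℤ × ℤ)) (m : ℕ) (e : ℤ × ℤ) :
    qpWalks S m e = Nat.card {f // IsQPWalk S m e f} :=
  rfl

lemma partialSum_of_le {m k : ℕ} (f : Fin m → ℤ × ℤ) (h : m ≤ k) :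
    partialSum f k = ∑ i, f i := by
  rw [partialSum, filter_true_of_mem fun i _ => i.isLt.trans_le h]

lemma fst_eq_zero_of_isQPWalk {S : Set (ℤ × ℤ)} (hS : ∀ v ∈ S, 0 ≤ v.1) {m : ℕ} {y : ℤ}
    {f : Fin m → ℤ × ℤ} (hf : IsQPWalk S m (0, y) f) (i : Fin m) : (f i).1 = 0 := by
  have hsum : ∑ j, (f j).1 = 0 := by rw [← Prod.fst_sum, hf.2.2]
  exact (sum_eq_zero_iff_of_nonneg fun j _ => hS _ (hf.1 j)).1 hsum i (mem_univ i)

namespace DyckStep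

def toVec : DyckStep → ℤ × ℤ
  | U => (0, 1)
  | D => (0, -1)

lemma toVec_injective : Function.Injective toVec := by
  intro a b; cases a <;> cases b <;> simp [toVec]

lemma sum_map_toVec (l : List DyckStep) :
    (l.map toVec).sum = (0, (l.count U : ℤ) - l.count D) := by
  induction l with
  | nil => rfl
  | cons a l ih =>
    cases a <;> simp [toVec, ih, Prod.ext_iff] <;> ring

end DyckStep

def IsDyck (l : List DyckStep) : Prop :=
  l.count U = l.count D ∧ ∀ i, (l.take i).count D ≤ (l.take i).count U

local notation "𝒮" => ({(0, 1), (0, -1), (1, -1)} : Set (ℤ × ℤ))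

lemma partialSum_toVec_comp {m : ℕ} (s : Fin m → DyckStep) (k : ℕ) :
    partialSum (toVec ∘ s) k =
      (0, (((ofFn s).take k).count U : ℤ) - ((ofFn s).take k).count D) := by
  rw [partialSum, ← sum_take_ofFn, ← map_ofFn, ← map_take, sum_map_toVec]

lemma isQPWalk_toVec_comp_iff {m : ℕ} (s : Fin m → DyckStep) :
    IsQPWalk 𝒮 m (0, 0) (toVec ∘ s) ↔ IsDyck (ofFn s) := by
  have hsteps : ∀ i, (toVec ∘ s) i ∈ 𝒮 := fun i => by
    rw [Function.comp_apply]; cases s i <;> simp [toVec]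
  have htotal := partialSum_toVec_comp s m
  rw [partialSum_of_le _ le_rfl, take_of_length_le (by simp)] at htotal
  simp only [IsQPWalk, IsDyck, hsteps, partialSum_toVec_comp, htotal, le_refl, true_and,
    Prod.ext_iff, sub_nonneg, sub_eq_zero, Nat.cast_le,
    Nat.cast_inj, implies_true]
  exact and_comm

lemma mem_range_toVec_of_isQPWalk {m : ℕ} {f : Fin m → ℤ × ℤ} (hf : IsQPWalk 𝒮 m (0, 0) f)
    (i : Fin m) : f i ∈ Set.range toVec := by
  have hfst := fst_eq_zero_of_isQPWalk (by simp) hf i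
  rcases hf.1 i with h | h | h <;> rw [h] at hfst ⊢
  · exact ⟨U, rfl⟩
  · exact ⟨D, rfl⟩
  · simp at hfst

lemma qpWalks_eq_card_isDyck (m : ℕ) :
    qpWalks 𝒮 m (0, 0) = Nat.card {s : Fin m → DyckStep // IsDyck (ofFn s)} := by
  rw [qpWalks_eq_card]
  refine (Nat.card_eq_of_bijective
    (fun s => ⟨toVec ∘ s.1, (isQPWalk_toVec_comp_iff s.1).2 s.2⟩) ⟨?_, ?_⟩).symm
  · intro s t h
    exact Subtype.ext (toVec_injective.comp_left (congrArg Subtype.val h))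
  · rintro ⟨f, hf⟩
    choose s hs using mem_range_toVec_of_isQPWalk hf
    have hf' : toVec ∘ s = f := funext hs
    exact ⟨⟨s, (isQPWalk_toVec_comp_iff s).1 (hf' ▸ hf)⟩, Subtype.ext hf'⟩

lemma card_isDyck_ofFn (m : ℕ) :
    Nat.card {s : Fin m → DyckStep // IsDyck (ofFn s)} =
      Nat.card {p : DyckWord // p.toList.length = m} := by
  refine Nat.card_eq_of_bijective (fun s => ⟨⟨ofFn s.1, s.2.1, s.2.2⟩, length_ofFn⟩) ⟨?_, ?_⟩
  · intro s t h
    exact Subtype.ext (ofFn_injective (congrArg (DyckWord.toList ∘ Subtype.val) h))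
  · rintro ⟨p, rfl⟩
    refine ⟨⟨fun i => p.toList[(i : ℕ)], ?_⟩, ?_⟩
    · rw [ofFn_getElem]
      exact ⟨p.count_U_eq_count_D, p.count_D_le_count_U⟩
    · exact Subtype.ext (DyckWord.ext ofFn_getElem)

lemma card_dyckWord_length_two_mul (n : ℕ) :
    Nat.card {p : DyckWord // p.toList.length = 2 * n} = catalan n := by
  have hlen (p : DyckWord) : p.toList.length = 2 * n ↔ p.semilength = n := by
    rw [← p.two_mul_semilength_eq_length]
    omega
  rw [Nat.card_congr (Equiv.subtypeEquivRight hlen), Nat.card_eq_fintype_card,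
    DyckWord.card_dyckWord_semilength_eq_catalan]

lemma card_dyckWord_length_of_odd {m : ℕ} (hm : Odd m) :
    Nat.card {p : DyckWord // p.toList.length = m} = 0 := by
  refine @Nat.card_of_isEmpty _ ⟨fun ⟨p, hp⟩ => ?_⟩
  rw [← p.two_mul_semilength_eq_length] at hp
  exact Nat.not_even_iff_odd.2 hm ⟨p.semilength, by omega⟩

lemma catalan_eq_choose_div (n : ℕ) :
    (catalan n : ℚ) = ((2 * n).choose n : ℚ) / (n + 1) := by
  rw [catalan_eq_centralBinom_div, Nat.cast_div (Nat.succ_dvd_centralBinom n) (by positivity),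
    Nat.centralBinom]
  push_cast
  ring

theorem closed_walks_step_set_4 :
    (∀ n : ℕ, (qpWalks {(0,1), (0,-1), (1,-1)} (2 * n) (0, 0) : ℚ) =
        ((2 * n).choose n : ℚ) / (n + 1)) ∧
    (∀ m : ℕ, Odd m → qpWalks {(0,1), (0,-1), (1,-1)} m (0, 0) = 0) := by
  refine ⟨fun n => ?_, fun m hm => ?_⟩
  · rw [← catalan_eq_choose_div, ← card_dyckWord_length_two_mul, ← card_isDyck_ofFn,
      ← qpWalks_eq_card_isDyck]
  · rw [qpWalks_eq_card_isDyck, card_isDyck_ofFn, card_dyckWord_length_of_odd hm]
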